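/- Let d, d', n be positive integers, let E = EuclideanSpace ℝ (Fin d) and E' be any type, let z_1,…,z_n ∈ E and y_1,…,y_n ∈ E'. Let k_Z : E → E → ℝ be a symmetric normalized kernel such that for each i ∈ {1,…,n−1} the map w ↦ k_Z(z_i, w) is differentiable at z_n, and let k_Y : E' → E' → ℝ be a symmetric normalized kernel. Define G : E → ℝ by G(w) = (1/n⁴) · Σ_{i=1}^n Σ_{j=1}^n k_Z(z'_i, z'_j)² · k_Y(y_i, y_j)², where z'_m = z_m for m < n and z'_n = w (so G is the conditional inverse-RKE loss L_Cond-IRKE viewed as a function of the n-th point). Then G is differentiable at z_n and its gradient there equals ∇G(z_n) = (4/n⁴) · Σ_{i=1}^{n−1} k_Z(z_i, z_n) · k_Y(y_i, y_n)² · ∇_w k_Z(z_i, w)|_{w = z_n}. -/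

import Mathlib

/-!
Splitting the double sum according to whether `i` or `j` is the last index, and using the
symmetry of both kernels, the loss is `1/n⁴` times a constant plus
`2 ∑_{i<n} k_Y(y_i, y_n)² k_Z(z_i, w)²`; the diagonal term `k_Z(w, w)² k_Y(y_n, y_n)²` is
constant because `k_Z` is normalized. The gradient of each square `k_Z(z_i, w)²` is
`2 k_Z(z_i, z_n) ∇k_Z(z_i, ·)`.
-/

open Finset

section Gradient

variable {F : Type*} [NormedAddCommGroup F] [InnerProductSpace ℝ F] [CompleteSpace F]
  {f : F → ℝ} {g : F} {x : F}

theorem HasGradientAt.const_add (c : ℝ) (hf : HasGradientAt f g x) :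
    HasGradientAt (fun w => c + f w) g x := by
  rw [hasGradientAt_iff_hasFDerivAt] at hf ⊢
  exact hf.const_add c

theorem HasGradientAt.const_mul (c : ℝ) (hf : HasGradientAt f g x) :
    HasGradientAt (fun w => c * f w) (c • g) x := by
  rw [hasGradientAt_iff_hasFDerivAt] at hf ⊢
  simpa using hf.const_mul c

theorem HasGradientAt.sq (hf : HasGradientAt f g x) :
    HasGradientAt (fun w => f w ^ 2) ((2 * f x) • g) x := by
  rw [hasGradientAt_iff_hasFDerivAt] at hf ⊢
  simpa using hf.pow 2

theorem HasGradientAt.fun_sum {ι : Type*} (s : Finset ι) {f : ι → F → ℝ} {g : ι → F}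
    (hf : ∀ i ∈ s, HasGradientAt (f i) (g i) x) :
    HasGradientAt (fun w => ∑ i ∈ s, f i w) (∑ i ∈ s, g i) x := by
  simp only [hasGradientAt_iff_hasFDerivAt, map_sum] at hf ⊢
  exact HasFDerivAt.fun_sum hf

end Gradient

theorem Fin.sum_sum_succ_of_symm {R : Type*} [CommSemiring R] {m : ℕ}
    (a : Fin (m + 1) → Fin (m + 1) → R) (ha : ∀ i j, a i j = a j i) :
    ∑ i, ∑ j, a i j = ∑ i : Fin m, ∑ j : Fin m, a i.castSucc j.castSucc
      + 2 * ∑ i : Fin m, a i.castSucc (Fin.last m) + a (Fin.last m) (Fin.last m) := by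
  simp only [Fin.sum_univ_castSucc, sum_add_distrib, ha (Fin.last m)]
  ring

theorem sum_sum_update_last_sq_mul_sq {E E' : Type*} {m : ℕ}
    (kZ : E → E → ℝ) (kY : E' → E' → ℝ)
    (hZsymm : ∀ x y, kZ x y = kZ y x) (hZnorm : ∀ x, kZ x x = 1)
    (hYsymm : ∀ u v, kY u v = kY v u) (z : Fin (m + 1) → E) (y : Fin (m + 1) → E') (w : E) :
    ∑ i, ∑ j, kZ (Function.update z (Fin.last m) w i) (Function.update z (Fin.last m) w j) ^ 2
        * kY (y i) (y j) ^ 2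
      = (∑ i : Fin m, ∑ j : Fin m, kZ (z i.castSucc) (z j.castSucc) ^ 2
            * kY (y i.castSucc) (y j.castSucc) ^ 2 + kY (y (Fin.last m)) (y (Fin.last m)) ^ 2)
        + 2 * ∑ i : Fin m, kY (y i.castSucc) (y (Fin.last m)) ^ 2 * kZ (z i.castSucc) w ^ 2 := by
  rw [Fin.sum_sum_succ_of_symm _ fun i j => by rw [hZsymm, hYsymm]]
  have hupdate (i : Fin m) : Function.update z (Fin.last m) w i.castSucc = z i.castSucc :=
    Function.update_of_ne (Fin.castSucc_lt_last i).ne _ _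
  simp only [hupdate, Function.update_self, hZnorm, one_pow, one_mul, mul_comm (kZ _ w ^ 2)]
  ring

theorem cond_irke_gradient_general (d m : ℕ) {E' : Type*}
    (kZ : EuclideanSpace ℝ (Fin d) → EuclideanSpace ℝ (Fin d) → ℝ)
    (kY : E' → E' → ℝ)
    (hZsymm : ∀ x y, kZ x y = kZ y x) (hZnorm : ∀ x, kZ x x = 1)
    (hYsymm : ∀ u v, kY u v = kY v u)
    (z : Fin (m + 1) → EuclideanSpace ℝ (Fin d))
    (y : Fin (m + 1) → E')
    (hdiff : ∀ i : Fin m,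
      DifferentiableAt ℝ (fun w => kZ (z i.castSucc) w) (z (Fin.last m)))
    (G : EuclideanSpace ℝ (Fin d) → ℝ)
    (hG : G = fun w =>
      (1 / ((m : ℝ) + 1) ^ 4) *
        ∑ i : Fin (m + 1), ∑ j : Fin (m + 1),
          (kZ (Function.update z (Fin.last m) w i)
             (Function.update z (Fin.last m) w j)) ^ 2 * (kY (y i) (y j)) ^ 2) :
    DifferentiableAt ℝ G (z (Fin.last m)) ∧
      gradient G (z (Fin.last m)) =
        (4 / ((m : ℝ) + 1) ^ 4) •
          ∑ i : Fin m,
            (kZ (z i.castSucc) (z (Fin.last m)) * (kY (y i.castSucc) (y (Fin.last m))) ^ 2) •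
              gradient (fun w => kZ (z i.castSucc) w) (z (Fin.last m)) := by
  simp only [sum_sum_update_last_sq_mul_sq kZ kY hZsymm hZnorm hYsymm] at hG
  set x := z (Fin.last m)
  have hgrad : HasGradientAt G ((1 / ((m : ℝ) + 1) ^ 4) • (2 : ℝ) •
      ∑ i : Fin m, kY (y i.castSucc) (y (Fin.last m)) ^ 2 •
        (2 * kZ (z i.castSucc) x) • gradient (kZ (z i.castSucc)) x) x := by
    rw [hG]
    exact (((HasGradientAt.fun_sum univ fun i _ =>
      (hdiff i).hasGradientAt.sq.const_mul _).const_mul 2).const_add _).const_mul _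
  refine ⟨hgrad.differentiableAt, hgrad.gradient.trans ?_⟩
  simp only [smul_sum, smul_smul]
  refine sum_congr rfl fun i _ => ?_
  congr 1
  ring

/-- Gradient of the conditional inverse-RKE loss with respect to the last point:
for symmetric normalized kernels `k_Z`, `k_Y`, the function
`G w = (1/n⁴) ∑ᵢ∑ⱼ k_Z(z'ᵢ, z'ⱼ)² k_Y(yᵢ, yⱼ)²` (where `z'` replaces the last
point by `w`) is differentiable at `zₙ` with gradient
`(4/n⁴) ∑_{i<n} k_Z(zᵢ, zₙ) k_Y(yᵢ, yₙ)² • ∇ₙ k_Z(zᵢ, ·)`.  Here `n = m + 1`. -/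
theorem cond_irke_gradient (d d' m : ℕ) (hd : 0 < d) (hd' : 0 < d') {E' : Type*}
    (kZ : EuclideanSpace ℝ (Fin d) → EuclideanSpace ℝ (Fin d) → ℝ)
    (kY : E' → E' → ℝ)
    (hZsymm : ∀ x y, kZ x y = kZ y x) (hZnorm : ∀ x, kZ x x = 1)
    (hYsymm : ∀ u v, kY u v = kY v u) (hYnorm : ∀ u, kY u u = 1)
    (z : Fin (m + 1) → EuclideanSpace ℝ (Fin d))
    (y : Fin (m + 1) → E')
    (hdiff : ∀ i : Fin m,
      DifferentiableAt ℝ (fun w => kZ (z i.castSucc) w) (z (Fin.last m)))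
    (G : EuclideanSpace ℝ (Fin d) → ℝ)
    (hG : G = fun w =>
      (1 / ((m : ℝ) + 1) ^ 4) *
        ∑ i : Fin (m + 1), ∑ j : Fin (m + 1),
          (kZ (Function.update z (Fin.last m) w i)
             (Function.update z (Fin.last m) w j)) ^ 2 * (kY (y i) (y j)) ^ 2) :
    DifferentiableAt ℝ G (z (Fin.last m)) ∧
      gradient G (z (Fin.last m)) =
        (4 / ((m : ℝ) + 1) ^ 4) •
          ∑ i : Fin m,
            (kZ (z i.castSucc) (z (Fin.last m)) * (kY (y i.castSucc) (y (Fin.last m))) ^ 2) •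
              gradient (fun w => kZ (z i.castSucc) w) (z (Fin.last m)) :=
  cond_irke_gradient_general d m kZ kY hZsymm hZnorm hYsymm z y hdiff G hG
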